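/- In the snapshot regime over BSC(p) or BEC(ε), the transition probability of flipping coordinate i from 0 to 1 satisfies, as β→0: P_β^S(x, x^{(i,1)}) = 1/(2n) + (β/(4n))·κ·ΔΦ_i(x) + o(β), where κ=1−2p (BSC) or κ=1−ε (BEC) and ΔΦ_i(x)=Φ(1,x_{-i})−Φ(0,x_{-i}). -/

import Mathlib

/-!
Write `σ t = 1 / (1 + exp (-t)) = 1/2 + t/4 + o(t)`. Averaging this over the finitely many
observation vectors `y` gives the kernel as `(1/n) (1/2 + (β/4) 𝔼[Δ̂ᵢ(y)]) + o(β)`. The observations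
are independent given `x`, so `𝔼[Δ̂ᵢ(y)] = κ Σⱼ vᵢⱼ (±1 according to xⱼ)`, and by the symmetry of `v`
this neighbour sum is `ΔΦᵢ(x)`: flipping `xᵢ` only changes the agreement terms of the edges at `i`,
each of which occurs twice in the ordered double sum defining `Φ`.
-/

open Finset Asymptotics

theorem logistic_sub_linear_isLittleO (C : ℝ) :
    (fun β : ℝ => 1 / (1 + Real.exp (-(β * C))) - (1 / 2 + β * C / 4)) =o[nhds 0] fun β => β := by
  have hden : HasDerivAt (fun β : ℝ => 1 + Real.exp (-(β * C))) (-C) 0 := by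
    simpa using (((hasDerivAt_id (0 : ℝ)).mul_const C).fun_neg.exp).const_add 1
  have hinv : HasDerivAt (fun β : ℝ => (1 + Real.exp (-(β * C)))⁻¹) (C / 4) 0 := by
    have h := hden.fun_inv (by positivity)
    rwa [show - -C / (1 + Real.exp (-(0 * C))) ^ 2 = C / 4 by norm_num] at h
  have h := hasDerivAt_iff_isLittleO.mp hinv
  simp only [sub_zero, zero_mul, neg_zero, Real.exp_zero, smul_eq_mul] at h
  refine h.congr_left fun β => ?_
  norm_num
  ring

theorem sum_mul_logistic_sub_linear_isLittleO {ι : Type*} [Fintype ι] (w c : ι → ℝ) :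
    (fun β : ℝ => ∑ y, w y * (1 / (1 + Real.exp (-(β * c y))))
      - (1 / 2 * ∑ y, w y + β / 4 * ∑ y, w y * c y)) =o[nhds 0] fun β => β := by
  refine (IsLittleO.fun_sum (s := univ) fun y _ =>
    (logistic_sub_linear_isLittleO (c y)).const_mul_left (w y)).congr_left fun β => ?_
  simp only [mul_sum, ← sum_add_distrib, ← sum_sub_distrib]
  exact sum_congr rfl fun y _ => by ring

section ProductChannel

variable {ι S : Type*} [Fintype ι] [DecidableEq ι] [Fintype S] (p : ι → S → ℝ)

theorem sum_prod_eq_one (hp : ∀ j, ∑ s, p j s = 1) : ∑ y : ι → S, ∏ j, p j (y j) = 1 := by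
  simp [← Fintype.prod_sum, hp]

theorem sum_prod_mul_apply (hp : ∀ j, ∑ s, p j s = 1) (f : S → ℝ) (j : ι) :
    ∑ y : ι → S, (∏ k, p k (y k)) * f (y j) = ∑ s, p j s * f s := by
  let q : ι → S → ℝ := fun k s => p k s * if k = j then f s else 1
  have hq : ∀ y : ι → S, (∏ k, p k (y k)) * f (y j) = ∏ k, q k (y k) := fun y => by
    rw [prod_mul_distrib, Fintype.prod_ite_eq' j (fun k => f (y k))]
  have hq_sum : ∀ k, ∑ s, q k s = if k = j then ∑ s, p j s * f s else 1 := fun k => by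
    by_cases hk : k = j
    · subst hk; simp [q]
    · simp [q, hk, hp]
  simp_rw [hq, ← Fintype.prod_sum, hq_sum, Fintype.prod_ite_eq']

end ProductChannel

def boolSign (b : Bool) : ℝ := (if b = true then 1 else 0) - if b = false then 1 else 0

section Potential

variable {V : Type*} [DecidableEq V] (G : SimpleGraph V) [DecidableRel G.Adj] (v : V → V → ℝ)

theorem agree_update_true_sub_false (hsymm : ∀ i j, v i j = v j i) (x : V → Bool) (i a b : V) :
    ((if G.Adj a b ∧ Function.update x i true a = Function.update x i true b then v a b else 0)
      - if G.Adj a b ∧ Function.update x i false a = Function.update x i false b then v a b else 0)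
      = (if a = i then (if G.Adj i b then v i b * boolSign (x b) else 0) else 0)
        + if b = i then (if G.Adj i a then v i a * boolSign (x a) else 0) else 0 := by
  simp only [boolSign, Function.update_apply]
  by_cases ha : a = i <;> by_cases hb : b = i
  · subst ha hb; simp
  · subst ha; cases x b <;> by_cases h : G.Adj a b <;> simp [h, hb]
  · subst hb; cases x a <;> by_cases h : G.Adj a b <;> simp [h, ha, G.adj_comm b a, hsymm a b]
  · simp [ha, hb]

theorem sum_agree_update_true_sub_false [Fintype V] (hsymm : ∀ i j, v i j = v j i)
    (x : V → Bool) (i : V) :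
    (∑ a, ∑ b, if G.Adj a b ∧ Function.update x i true a = Function.update x i true b
        then v a b else 0)
      - (∑ a, ∑ b, if G.Adj a b ∧ Function.update x i false a = Function.update x i false b
        then v a b else 0)
      = 2 * ∑ j ∈ G.neighborFinset i, v i j * boolSign (x j) := by
  simp only [← sum_sub_distrib, agree_update_true_sub_false G v hsymm, sum_add_distrib,
    Fintype.sum_ite_eq', sum_ite_irrel, sum_const_zero]
  rw [SimpleGraph.neighborFinset_eq_filter, sum_filter]
  ring

end Potential

theorem stmt8_general {V : Type*} [Fintype V] [DecidableEq V]
    (G : SimpleGraph V) [DecidableRel G.Adj]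
    (v : V → V → ℝ) (hsymm : ∀ i j, v i j = v j i)
    {S : Type*} [Fintype S] [DecidableEq S] (one zero : S)
    (chan : Bool → S → ℝ) (κ : ℝ)
    (hprob : ∀ a, ∑ s, chan a s = 1)
    (hmean : ∀ a : Bool,
      ∑ s, chan a s * ((if s = one then (1:ℝ) else 0) - (if s = zero then (1:ℝ) else 0))
        = κ * ((if a = true then (1:ℝ) else 0) - (if a = false then (1:ℝ) else 0)))
    (Φ : (V → Bool) → ℝ)
    (hΦ : ∀ x, Φ x =
      (1/2) * ∑ a, ∑ b, if G.Adj a b ∧ x a = x b then v a b else 0)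
    (x : V → Bool) (i : V)
    (ΔΦ : ℝ) (hΔΦ : ΔΦ = Φ (Function.update x i true) - Φ (Function.update x i false)) :
    (fun β : ℝ =>
      (1 / (Fintype.card V : ℝ)) *
        (∑ y : V → S, (∏ j, chan (x j) (y j)) *
          (1 / (1 + Real.exp (-(β * ∑ j ∈ G.neighborFinset i, v i j *
            ((if y j = one then (1:ℝ) else 0) - (if y j = zero then (1:ℝ) else 0)))))))
      - (1 / (2 * (Fintype.card V : ℝ)) + β / (4 * (Fintype.card V : ℝ)) * κ * ΔΦ))
      =o[nhds 0] (fun β => β) := by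
  set w : (V → S) → ℝ := fun y => ∏ j, chan (x j) (y j)
  set obs : S → ℝ := fun s => (if s = one then (1:ℝ) else 0) - if s = zero then 1 else 0
  have hmass : ∑ y, w y = 1 := sum_prod_eq_one (fun j => chan (x j)) fun j => hprob (x j)
  have hΔΦ' : ΔΦ = ∑ j ∈ G.neighborFinset i, v i j * boolSign (x j) := by
    rw [hΔΦ, hΦ, hΦ, ← mul_sub, sum_agree_update_true_sub_false G v hsymm]
    ring
  have hmarginal : ∀ j, ∑ y, w y * obs (y j) = κ * boolSign (x j) := fun j =>
    (sum_prod_mul_apply (fun j => chan (x j)) (fun j => hprob (x j)) obs j).trans (hmean (x j))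
  have hdrift : ∑ y, w y * ∑ j ∈ G.neighborFinset i, v i j * obs (y j) = κ * ΔΦ :=
    calc ∑ y, w y * ∑ j ∈ G.neighborFinset i, v i j * obs (y j)
        = ∑ j ∈ G.neighborFinset i, v i j * ∑ y, w y * obs (y j) := by
          simp only [mul_sum]
          rw [sum_comm]
          exact sum_congr rfl fun j _ => sum_congr rfl fun y _ => by ring
      _ = κ * ΔΦ := by
          simp only [hmarginal, hΔΦ', mul_sum]
          exact sum_congr rfl fun j _ => by ring
  refine ((sum_mul_logistic_sub_linear_isLittleO w
    fun y => ∑ j ∈ G.neighborFinset i, v i j * obs (y j)).const_mul_left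
      (1 / (Fintype.card V : ℝ))).congr_left fun β => ?_
  rw [hmass, hdrift]
  ring

/-- High-temperature expansion of the snapshot kernel: the probability that a
uniformly chosen agent `i` (with `x_i = 0`) flips to `1` after a logit response
to one noisy observation per neighbor satisfies
`P_β^S(x, x^{(i,1)}) = 1/(2n) + (β/(4n))·κ·ΔΦ_i(x) + o(β)` as `β → 0`.
The channel is an abstract finite-alphabet memoryless channel with designated
output symbols and attenuation `κ` (BSC: `κ = 1-2p`; BEC: `κ = 1-ε`). -/
theorem stmt8 {V : Type*} [Fintype V] [DecidableEq V] [Nonempty V]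
    (G : SimpleGraph V) [DecidableRel G.Adj]
    (v : V → V → ℝ) (hsymm : ∀ i j, v i j = v j i) (hnn : ∀ i j, 0 ≤ v i j)
    {S : Type*} [Fintype S] [DecidableEq S] (one zero : S)
    (chan : Bool → S → ℝ) (κ : ℝ)
    (hchan_nn : ∀ a s, 0 ≤ chan a s)
    (hprob : ∀ a, ∑ s, chan a s = 1)
    (hmean : ∀ a : Bool,
      ∑ s, chan a s * ((if s = one then (1:ℝ) else 0) - (if s = zero then (1:ℝ) else 0))
        = κ * ((if a = true then (1:ℝ) else 0) - (if a = false then (1:ℝ) else 0)))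
    (Φ : (V → Bool) → ℝ)
    (hΦ : ∀ x, Φ x =
      (1/2) * ∑ a, ∑ b, if G.Adj a b ∧ x a = x b then v a b else 0)
    (x : V → Bool) (i : V) (hx : x i = false)
    (ΔΦ : ℝ) (hΔΦ : ΔΦ = Φ (Function.update x i true) - Φ (Function.update x i false)) :
    (fun β : ℝ =>
      (1 / (Fintype.card V : ℝ)) *
        (∑ y : V → S, (∏ j, chan (x j) (y j)) *
          (1 / (1 + Real.exp (-(β * ∑ j ∈ G.neighborFinset i, v i j *
            ((if y j = one then (1:ℝ) else 0) - (if y j = zero then (1:ℝ) else 0)))))))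
      - (1 / (2 * (Fintype.card V : ℝ)) + β / (4 * (Fintype.card V : ℝ)) * κ * ΔΦ))
      =o[nhds 0] (fun β => β) :=
  stmt8_general G v hsymm one zero chan κ hprob hmean Φ hΦ x i ΔΦ hΔΦ
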